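/- Let L be a finitary first-order language that is purely monadic (its only symbols are unary relation symbols; it has no function symbols and no constant symbols), and let φ be an equality-free L-sentence (built from atomic formulas P(x) using Boolean connectives and quantifiers, without the equality symbol). Then there is an equality-free L-sentence χ expressing θ(φ): for every nonempty L-structure A, A ⊨ χ iff some nonempty substructure of A satisfies φ. -/
import Mathlib


/- STATEMENT 10: For a purely monadic finitary first-order language L (only unary
relation symbols) and an equality-free L-sentence φ, there is an equality-free
L-sentence χ expressing θ(φ). -/

open FirstOrder Language

universe u v w

namespace SatSub

/-- A formula is equality-free iff it contains no equality atom. -/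
def EqualityFree {L : FirstOrder.Language.{u, v}} {α : Type w} :
    ∀ {n : ℕ}, L.BoundedFormula α n → Prop
  | _, .falsum => True
  | _, .equal _ _ => False
  | _, .rel _ _ => True
  | _, .imp f₁ f₂ => EqualityFree f₁ ∧ EqualityFree f₂
  | _, .all f => EqualityFree f

open FirstOrder.Language.BoundedFormula FirstOrder.Language.Structure

variable {L : FirstOrder.Language.{u, v}}

/-- The list of relation symbols occurring in a bounded formula. -/
def rels {α : Type w} : ∀ {n : ℕ}, L.BoundedFormula α n → List (Σ l, L.Relations l)
  | _, .falsum => []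
  | _, .equal _ _ => []
  | _, .rel R _ => [⟨_, R⟩]
  | _, .imp f₁ f₂ => rels f₁ ++ rels f₂
  | _, .all f => rels f

lemma term_eq_var [L.IsRelational] {β : Type*} (t : L.Term β) : ∃ x, t = Term.var x := by
  cases t with
  | var x => exact ⟨x, rfl⟩
  | func f _ => exact isEmptyElim f

lemma snoc_rel {M : Type*} {N : Type*} (Rl : M → N → Prop) {n : ℕ}
    {xs : Fin n → M} {xs' : Fin n → N} (hxs : ∀ i, Rl (xs i) (xs' i))
    {a : M} {b : N} (hab : Rl a b) :
    ∀ i : Fin (n + 1),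
      Rl (Fin.snoc (α := fun _ => M) xs a i) (Fin.snoc (α := fun _ => N) xs' b i) := by
  intro i
  refine Fin.lastCases ?_ ?_ i
  · simpa using hab
  · intro j; simpa using hxs j

/-- Equality-free formulas are invariant under total surjective bisimulations that
preserve the relations occurring in the formula. -/
lemma realize_iff_of_bisim [L.IsRelational] {M : Type*} {N : Type*}
    [L.Structure M] [L.Structure N]
    (L0 : List (Σ l, L.Relations l)) (Rl : M → N → Prop)
    (htot : ∀ a, ∃ b, Rl a b) (hsur : ∀ b, ∃ a, Rl a b)
    (hpres : ∀ (l : ℕ) (r : L.Relations l), ⟨l, r⟩ ∈ L0 →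
      ∀ (xa : Fin l → M) (xb : Fin l → N), (∀ i, Rl (xa i) (xb i)) →
        (RelMap r xa ↔ RelMap r xb))
    {α : Type w} {n : ℕ} (ψ : L.BoundedFormula α n) (hψ : EqualityFree ψ)
    (hsub : ∀ s ∈ rels ψ, s ∈ L0) :
    ∀ (v : α → M) (v' : α → N), (∀ i, Rl (v i) (v' i)) →
    ∀ (xs : Fin n → M) (xs' : Fin n → N), (∀ i, Rl (xs i) (xs' i)) →
    (ψ.Realize v xs ↔ ψ.Realize v' xs') := by
  induction ψ with
  | falsum => intro _ _ _ _ _ _; exact Iff.rfl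
  | equal t₁ t₂ => exact absurd hψ (by simp [EqualityFree])
  | rel R ts =>
    intro v v' hv xs xs' hxs
    refine hpres _ R (hsub _ (by simp [rels])) _ _ fun i => ?_
    show Rl ((ts i).realize (Sum.elim v xs)) ((ts i).realize (Sum.elim v' xs'))
    obtain ⟨x, hx⟩ := term_eq_var (ts i)
    rw [hx]
    cases x with
    | inl a => exact hv a
    | inr j => exact hxs j
  | imp f₁ f₂ ih₁ ih₂ =>
    intro v v' hv xs xs' hxs
    obtain ⟨h1, h2⟩ : EqualityFree f₁ ∧ EqualityFree f₂ := hψ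
    simp only [BoundedFormula.realize_imp]
    rw [ih₁ h1 (fun s hs => hsub s (by simp [rels, hs])) v v' hv xs xs' hxs,
        ih₂ h2 (fun s hs => hsub s (by simp [rels, hs])) v v' hv xs xs' hxs]
  | all f ih =>
    intro v v' hv xs xs' hxs
    simp only [BoundedFormula.realize_all]
    constructor
    · intro h b
      obtain ⟨a, ha⟩ := hsur b
      rw [← ih hψ hsub v v' hv _ _ (snoc_rel Rl hxs ha)]
      exact h a
    · intro h a
      obtain ⟨b, hb⟩ := htot a
      rw [ih hψ hsub v v' hv _ _ (snoc_rel Rl hxs hb)]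
      exact h b

open Classical in
/-- The restricted atomic type of an element, relative to a list of unary relations. -/
noncomputable def rty (Rlist : List (L.Relations 1)) (M : Type*) [L.Structure M] (a : M) :
    Fin Rlist.length → Bool :=
  fun i => decide (RelMap (Rlist.get i) (fun _ => a))

/-- Conjunction-like connective built from `imp` and `falsum` only. -/
def andF {α : Type w} {m : ℕ} (f g : L.BoundedFormula α m) : L.BoundedFormula α m :=
  (f.imp g.not).not

/-- Disjunction-like connective built from `imp` and `falsum` only. -/
def orF {α : Type w} {m : ℕ} (f g : L.BoundedFormula α m) : L.BoundedFormula α m :=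
  f.not.imp g

/-- Conjunction of a list of formulas. -/
def conjF {α : Type w} {m : ℕ} (l : List (L.BoundedFormula α m)) : L.BoundedFormula α m :=
  l.foldr andF (BoundedFormula.falsum.not)

/-- Disjunction of a list of formulas. -/
def disjF {α : Type w} {m : ℕ} (l : List (L.BoundedFormula α m)) : L.BoundedFormula α m :=
  l.foldr orF BoundedFormula.falsum

lemma eqfree_not {α : Type w} {m : ℕ} {f : L.BoundedFormula α m} (hf : EqualityFree f) :
    EqualityFree f.not :=
  ⟨hf, trivial⟩

lemma eqfree_andF {α : Type w} {m : ℕ} {f g : L.BoundedFormula α m}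
    (hf : EqualityFree f) (hg : EqualityFree g) : EqualityFree (andF f g) :=
  ⟨⟨hf, eqfree_not hg⟩, trivial⟩

lemma eqfree_orF {α : Type w} {m : ℕ} {f g : L.BoundedFormula α m}
    (hf : EqualityFree f) (hg : EqualityFree g) : EqualityFree (orF f g) :=
  ⟨eqfree_not hf, hg⟩

lemma eqfree_conjF {α : Type w} {m : ℕ} {l : List (L.BoundedFormula α m)}
    (h : ∀ f ∈ l, EqualityFree f) : EqualityFree (conjF l) := by
  induction l with
  | nil => exact ⟨trivial, trivial⟩
  | cons f l ih =>
    exact eqfree_andF (h f (by simp)) (ih fun g hg => h g (by simp [hg]))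

lemma eqfree_disjF {α : Type w} {m : ℕ} {l : List (L.BoundedFormula α m)}
    (h : ∀ f ∈ l, EqualityFree f) : EqualityFree (disjF l) := by
  induction l with
  | nil => exact trivial
  | cons f l ih =>
    exact eqfree_orF (h f (by simp)) (ih fun g hg => h g (by simp [hg]))

lemma eqfree_ex {α : Type w} {m : ℕ} {f : L.BoundedFormula α (m + 1)}
    (hf : EqualityFree f) : EqualityFree f.ex :=
  eqfree_not (show EqualityFree (f.not.all) from eqfree_not hf)

section RealizeLemmas

variable {M : Type*} [L.Structure M] {α : Type w} {m : ℕ}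

lemma realize_andF {f g : L.BoundedFormula α m} {v : α → M} {xs : Fin m → M} :
    (andF f g).Realize v xs ↔ f.Realize v xs ∧ g.Realize v xs := by
  simp only [andF, BoundedFormula.realize_not, BoundedFormula.realize_imp]
  tauto

lemma realize_orF {f g : L.BoundedFormula α m} {v : α → M} {xs : Fin m → M} :
    (orF f g).Realize v xs ↔ f.Realize v xs ∨ g.Realize v xs := by
  simp only [orF, BoundedFormula.realize_not, BoundedFormula.realize_imp]
  tauto

lemma realize_conjF {l : List (L.BoundedFormula α m)} {v : α → M} {xs : Fin m → M} :
    (conjF l).Realize v xs ↔ ∀ f ∈ l, f.Realize v xs := by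
  induction l with
  | nil =>
    simp only [conjF, List.foldr_nil, List.not_mem_nil, false_implies, implies_true, iff_true]
    exact fun h => h
  | cons f l ih =>
    simp only [conjF, List.foldr_cons, List.mem_cons] at *
    rw [realize_andF, ih]
    constructor
    · rintro ⟨hf, hl⟩ g (rfl | hg)
      · exact hf
      · exact hl g hg
    · intro h
      exact ⟨h f (Or.inl rfl), fun g hg => h g (Or.inr hg)⟩

lemma realize_disjF {l : List (L.BoundedFormula α m)} {v : α → M} {xs : Fin m → M} :
    (disjF l).Realize v xs ↔ ∃ f ∈ l, f.Realize v xs := by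
  induction l with
  | nil =>
    simp only [disjF, List.foldr_nil, List.not_mem_nil, false_and, exists_false, iff_false]
    exact fun h => h
  | cons f l ih =>
    simp only [disjF, List.foldr_cons, List.mem_cons] at *
    rw [realize_orF, ih]
    constructor
    · rintro (h | ⟨g, hg, h⟩)
      · exact ⟨f, Or.inl rfl, h⟩
      · exact ⟨g, Or.inr hg, h⟩
    · rintro ⟨g, (rfl | hg), h⟩
      · exact Or.inl h
      · exact Or.inr ⟨g, hg, h⟩

end RealizeLemmas

/-- The atomic formula saying the (unique) bound variable satisfies the `i`-th relation. -/
def atomF (Rlist : List (L.Relations 1)) (i : Fin Rlist.length) : L.BoundedFormula Empty 1 :=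
  BoundedFormula.rel (Rlist.get i) (fun _ => Term.var (Sum.inr 0))

lemma realize_atomF {Rlist : List (L.Relations 1)} {M : Type*} [L.Structure M]
    {v : Empty → M} {xs : Fin 1 → M} (i : Fin Rlist.length) :
    (atomF Rlist i).Realize v xs ↔ RelMap (Rlist.get i) (fun _ : Fin 1 => xs 0) :=
  Iff.rfl

/-- The literal corresponding to the value of a type function at `i`. -/
def litF (Rlist : List (L.Relations 1)) (τ : Fin Rlist.length → Bool) (i : Fin Rlist.length) :
    L.BoundedFormula Empty 1 :=
  if τ i then atomF Rlist i else (atomF Rlist i).not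

/-- The formula describing the restricted type `τ`. -/
def deltaF (Rlist : List (L.Relations 1)) (τ : Fin Rlist.length → Bool) :
    L.BoundedFormula Empty 1 :=
  conjF ((List.finRange Rlist.length).map (litF Rlist τ))

lemma realize_deltaF {Rlist : List (L.Relations 1)} {τ : Fin Rlist.length → Bool}
    {M : Type*} [L.Structure M] {v : Empty → M} {xs : Fin 1 → M} :
    (deltaF Rlist τ).Realize v xs ↔ rty Rlist M (xs 0) = τ := by
  rw [deltaF, realize_conjF]
  constructor
  · intro h
    funext i
    have hi := h (litF Rlist τ i) (by simp)
    by_cases hτ : τ i = true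
    · rw [litF, if_pos hτ, realize_atomF] at hi
      rw [hτ]
      simp only [rty, decide_eq_true_eq]
      exact hi
    · rw [litF, if_neg hτ, BoundedFormula.realize_not, realize_atomF] at hi
      simp only [Bool.not_eq_true] at hτ
      rw [hτ]
      simp only [rty, decide_eq_false_iff_not]
      exact hi
  · intro h f hf
    simp only [List.mem_map, List.mem_finRange] at hf
    obtain ⟨i, _, rfl⟩ := hf
    have hty : rty Rlist M (xs 0) i = τ i := by rw [h]
    simp only [rty] at hty
    by_cases hτ : τ i = true
    · rw [litF, if_pos hτ, realize_atomF]
      rw [hτ] at hty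
      simp only [decide_eq_true_eq] at hty
      exact hty
    · rw [litF, if_neg hτ, BoundedFormula.realize_not, realize_atomF]
      simp only [Bool.not_eq_true] at hτ
      rw [hτ] at hty
      simp only [decide_eq_false_iff_not] at hty
      exact hty

theorem theta_expressible_equalityFree_of_monadic
    {L : FirstOrder.Language.{u, v}} [L.IsRelational]
    (hmon : ∀ n : ℕ, n ≠ 1 → IsEmpty (L.Relations n))
    (φ : L.Sentence) (hφ : EqualityFree φ) :
    ∃ χ : L.Sentence, EqualityFree χ ∧
      ∀ (M : Type (max u v)) [L.Structure M] [Nonempty M],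
        M ⊨ χ ↔ ∃ S : L.Substructure M, Nonempty S ∧ S ⊨ φ := by
  classical
  set Rlist : List (L.Relations 1) :=
    (rels φ).filterMap (fun s => if h : s.1 = 1 then some (h ▸ s.2) else none) with hRl
  have memRl : ∀ (r : L.Relations 1), (⟨1, r⟩ : Σ l, L.Relations l) ∈ rels φ → r ∈ Rlist := by
    intro r hr
    rw [hRl]
    exact List.mem_filterMap.mpr ⟨⟨1, r⟩, hr, by simp⟩
  set Φ : Finset (Fin Rlist.length → Bool) → Prop := fun T =>
    T.Nonempty ∧ ∀ (N : Type (max u v)) [L.Structure N] [Nonempty N],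
      Set.range (rty Rlist N) = ↑T → N ⊨ φ with hΦ
  refine ⟨disjF (((Finset.univ.filter Φ).toList).map
      (fun T => conjF (T.toList.map fun τ => (deltaF Rlist τ).ex))), ?_, ?_⟩
  · apply eqfree_disjF
    intro f hf
    simp only [List.mem_map] at hf
    obtain ⟨T, _, rfl⟩ := hf
    apply eqfree_conjF
    intro g hg
    simp only [List.mem_map] at hg
    obtain ⟨τ, _, rfl⟩ := hg
    apply eqfree_ex
    apply eqfree_conjF
    intro h hh
    simp only [List.mem_map] at hh
    obtain ⟨i, _, rfl⟩ := hh
    rw [litF]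
    split
    · exact trivial
    · exact eqfree_not trivial
  · intro M _ _
    have bisim : ∀ (A : Type (max u v)) (B : Type (max u v))
        [L.Structure A] [L.Structure B],
        Set.range (rty Rlist A) = Set.range (rty Rlist B) → A ⊨ φ → B ⊨ φ := by
      intro A B _ _ hAB hA
      have key := realize_iff_of_bisim (M := A) (N := B) (rels φ)
        (fun a b => rty Rlist A a = rty Rlist B b)
        (fun a => by
          have : rty Rlist A a ∈ Set.range (rty Rlist B) := hAB ▸ Set.mem_range_self a
          obtain ⟨b, hb⟩ := this
          exact ⟨b, hb.symm⟩)
        (fun b => by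
          have : rty Rlist B b ∈ Set.range (rty Rlist A) := hAB.symm ▸ Set.mem_range_self b
          obtain ⟨a, ha⟩ := this
          exact ⟨a, ha⟩)
        ?_ φ hφ (fun s hs => hs) (default : Empty → A) (default : Empty → B)
        (fun i => i.elim) (default : Fin 0 → A) (default : Fin 0 → B) (fun i => Fin.elim0 i)
      · exact key.mp hA
      · intro l r hmem xa xb hrel
        by_cases heq : l = 1
        · subst heq
          have hr : r ∈ Rlist := memRl r hmem
          obtain ⟨i, hi⟩ := List.mem_iff_get.mp hr
          have h0 := congrFun (hrel 0) i
          simp only [rty] at h0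
          have hxa : xa = fun _ => xa 0 := funext fun j => by rw [Subsingleton.elim j 0]
          have hxb : xb = fun _ => xb 0 := funext fun j => by rw [Subsingleton.elim j 0]
          rw [hxa, hxb, ← hi]
          exact decide_eq_decide.mp h0
        · haveI := hmon l heq
          exact isEmptyElim r
    constructor
    · -- from χ to a substructure
      intro hχ
      obtain ⟨f, hf, hreal⟩ := realize_disjF.mp hχ
      simp only [List.mem_map, Finset.mem_toList, Finset.mem_filter, Finset.mem_univ,
        true_and] at hf
      obtain ⟨T, hT, rfl⟩ := hf
      rw [realize_conjF] at hreal
      have hreach : ∀ τ ∈ T, ∃ a : M, rty Rlist M a = τ := by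
        intro τ hτ
        have hex := hreal ((deltaF Rlist τ).ex) (by
          simp only [List.mem_map, Finset.mem_toList]
          exact ⟨τ, hτ, rfl⟩)
        rw [BoundedFormula.realize_ex] at hex
        obtain ⟨a, ha⟩ := hex
        rw [realize_deltaF] at ha
        exact ⟨_, ha⟩
      set Sset : Set M := {a | rty Rlist M a ∈ T} with hSset
      have hfun : ∀ {k : ℕ} (f : L.Functions k) (x : Fin k → M),
          (∀ i, x i ∈ Sset) → Structure.funMap f x ∈ Sset := fun {k} f => isEmptyElim f
      set S : L.Substructure M := ⟨Sset, hfun⟩ with hS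
      obtain ⟨τ₀, hτ₀⟩ := hT.1
      obtain ⟨a₀, ha₀⟩ := hreach τ₀ hτ₀
      have hco : ∀ a : S, rty Rlist (↥S) a = rty Rlist M (↑a) := by
        intro a
        funext i
        rfl
      have hrange : Set.range (rty Rlist (↥S)) = ↑T := by
        ext τ
        constructor
        · rintro ⟨a, rfl⟩
          rw [hco]
          exact a.2
        · intro hτ
          obtain ⟨a, ha⟩ := hreach τ (by simpa using hτ)
          refine ⟨⟨a, show rty Rlist M a ∈ T from ha ▸ (by simpa using hτ)⟩, ?_⟩
          rw [hco]
          exact ha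
      haveI hne : Nonempty S := ⟨⟨a₀, show rty Rlist M a₀ ∈ T from ha₀ ▸ hτ₀⟩⟩
      exact ⟨S, hne, hT.2 S hrange⟩
    · -- from a substructure to χ
      rintro ⟨S, hne, hSφ⟩
      haveI := hne
      set T : Finset (Fin Rlist.length → Bool) :=
        (Set.toFinite (Set.range (rty Rlist (↥S)))).toFinset with hT
      have hTcoe : ↑T = Set.range (rty Rlist (↥S)) := Set.Finite.coe_toFinset _
      have hco : ∀ a : S, rty Rlist (↥S) a = rty Rlist M (↑a) := by
        intro a; funext i; rfl
      have hΦT : Φ T := by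
        constructor
        · obtain ⟨a⟩ := hne
          exact ⟨rty Rlist (↥S) a, by rw [hT, Set.Finite.mem_toFinset]; exact ⟨a, rfl⟩⟩
        · intro N _ _ hN
          exact bisim (↥S) N (by rw [hN, hTcoe]) hSφ
      refine realize_disjF.mpr
        ⟨conjF (T.toList.map fun τ => (deltaF Rlist τ).ex), ?_, ?_⟩
      · simp only [List.mem_map, Finset.mem_toList, Finset.mem_filter, Finset.mem_univ, true_and]
        exact ⟨T, hΦT, rfl⟩
      · rw [realize_conjF]
        intro f hf
        simp only [List.mem_map, Finset.mem_toList] at hf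
        obtain ⟨τ, hτ, rfl⟩ := hf
        rw [BoundedFormula.realize_ex]
        have hmem : τ ∈ (↑T : Set _) := hτ
        rw [hTcoe] at hmem
        obtain ⟨a, ha⟩ := hmem
        refine ⟨↑a, ?_⟩
        rw [realize_deltaF]
        have hsnoc : (Fin.snoc (α := fun _ => M) (default : Fin 0 → M) (↑a : M)) 0 = (↑a : M) := by
          rw [show (0 : Fin 1) = Fin.last 0 from rfl, Fin.snoc_last]
        rw [hsnoc, ← hco]
        exact ha

end SatSub
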